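/- arXiv:2503.20825 — 2 statements merged into one kernel-verified Lean document; each statement's English description precedes it below -/
import Mathlib

section
/- In the one-dimensional Robbins–Monro setting, if b_k := E[(x̂_k − x*)²] satisfies b_{k+1} ≤ b_k − 2 a_k K b_k + a_k² h² for some K > 0, where Σ a_k = ∞, Σ a_k² < ∞ and a_k > 0, then b_k → 0. -/
/-!
Write the recursion as `b (k+1) ≤ (1 - c k) b k + c k e k` with `c k = 2 K a k` and
`e k = a k h² / (2K)`. Since `Σ a² < ∞`, `a → 0`, so `e → 0` and eventually `c ≤ 1`.
Once `e ≤ ε / 2`, every step taken while `b > ε` lowers `b` by at least `c k ε / 2`; as `Σ c = ∞`,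
`b` cannot stay above `ε`. Once `b ≤ ε` it stays there, because the right-hand side is then a convex
combination of two numbers `≤ ε`.
-/

open Filter Topology

theorem tendsto_atBot_of_le_sub {u c : ℕ → ℝ} (hc : ∀ n, 0 ≤ c n) (hdiv : ¬ Summable c)
    (hdec : ∀ n, u (n + 1) ≤ u n - c n) : Tendsto u atTop atBot := by
  have htelescope : ∀ n, u n ≤ u 0 + -∑ i ∈ Finset.range n, c i := by
    intro n
    induction n with
    | zero => simp
    | succ n ih =>
      rw [Finset.sum_range_succ]
      linarith [hdec n]
  refine tendsto_atBot_mono htelescope (tendsto_atBot_add_const_left _ _ ?_)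
  exact tendsto_neg_atTop_atBot.comp ((not_summable_iff_tendsto_nat_atTop_of_nonneg hc).1 hdiv)

theorem Filter.eventually_atTop_of_frequently_of_imp_succ {P : ℕ → Prop}
    (hfreq : ∃ᶠ n in atTop, P n) (hstep : ∀ᶠ n in atTop, P n → P (n + 1)) :
    ∀ᶠ n in atTop, P n := by
  obtain ⟨N, hN⟩ := eventually_atTop.1 hstep
  obtain ⟨m, hmN, hm⟩ := frequently_atTop.1 hfreq N
  refine eventually_atTop.2 ⟨m, fun n hmn => ?_⟩
  induction n, hmn using Nat.le_induction with
  | base => exact hm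
  | succ n hmn ih => exact hN n (hmN.trans hmn) ih

section AveragedRecursion

variable {u c e : ℕ → ℝ}

theorem frequently_le_of_le_one_sub_mul_add_mul (hc : ∀ k, 0 ≤ c k) (hdiv : ¬ Summable c)
    (he : Tendsto e atTop (𝓝 0))
    (hrec : ∀ᶠ k in atTop, u (k + 1) ≤ (1 - c k) * u k + c k * e k) {ε : ℝ} (hε : 0 < ε) :
    ∃ᶠ k in atTop, u k ≤ ε := by
  by_contra hfreq
  have habove : ∀ᶠ k in atTop, ε < u k := by simpa using not_frequently.1 hfreq
  have hdec : ∀ᶠ k in atTop, u (k + 1) ≤ u k - ε / 2 * c k := by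
    filter_upwards [hrec, habove, he.eventually_le_const (half_pos hε)] with k hrec habove he
    nlinarith [mul_le_mul_of_nonneg_left (by linarith : ε / 2 ≤ u k - e k) (hc k)]
  obtain ⟨N, hN⟩ := eventually_atTop.1 hdec
  have hbot : Tendsto u atTop atBot := by
    refine (tendsto_add_atTop_iff_nat N).1
      (tendsto_atBot_of_le_sub (c := fun n => ε / 2 * c (n + N)) (fun n => mul_nonneg (half_pos hε).le (hc _)) ?_
        fun n => by simpa only [Nat.add_right_comm] using hN (n + N) (Nat.le_add_left N n))
    rwa [summable_mul_left_iff (half_pos hε).ne', summable_nat_add_iff]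
  exact (habove.and (hbot.eventually_lt_atBot ε)).exists.elim fun k hk => hk.1.not_gt hk.2

theorem tendsto_zero_of_le_one_sub_mul_add_mul (hu : ∀ k, 0 ≤ u k) (hc : ∀ k, 0 ≤ c k)
    (hc_le_one : ∀ᶠ k in atTop, c k ≤ 1) (hdiv : ¬ Summable c) (he : Tendsto e atTop (𝓝 0))
    (hrec : ∀ᶠ k in atTop, u (k + 1) ≤ (1 - c k) * u k + c k * e k) :
    Tendsto u atTop (𝓝 0) := by
  refine tendsto_order.2 ⟨fun a ha => .of_forall fun k => ha.trans_le (hu k), fun ε hε => ?_⟩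
  have hle : ∀ᶠ k in atTop, u k ≤ ε / 2 := by
    refine eventually_atTop_of_frequently_of_imp_succ
      (frequently_le_of_le_one_sub_mul_add_mul hc hdiv he hrec (half_pos hε)) ?_
    filter_upwards [hrec, hc_le_one, he.eventually_le_const (half_pos hε)] with k hrec hc1 he hu
    nlinarith [mul_le_mul_of_nonneg_left hu (sub_nonneg.2 hc1),
      mul_le_mul_of_nonneg_left he (hc k)]
  exact hle.mono fun k hk => hk.trans_lt (half_lt_self hε)

end AveragedRecursion

/-- Mean-square Robbins–Monro: if `b_k = E[(x̂_k − x*)²] ≥ 0` satisfies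
`b_{k+1} ≤ b_k − 2 a_k K b_k + a_k² h²` with `K > 0`, `a_k > 0`, `Σ a_k = ∞`,
`Σ a_k² < ∞`, then `b_k → 0`. -/
theorem robbins_monro_mean_square (b a : ℕ → ℝ) (K h : ℝ) (hK : 0 < K)
    (hb : ∀ k, 0 ≤ b k) (ha : ∀ k, 0 < a k)
    (hadiv : ¬ Summable a) (hasq : Summable fun k => (a k) ^ 2)
    (hrec : ∀ k, b (k + 1) ≤ b k - 2 * a k * K * b k + (a k) ^ 2 * h ^ 2) :
    Tendsto b atTop (nhds 0) := by
  have ha_zero : Tendsto a atTop (𝓝 0) := by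
    simpa [Real.sqrt_sq (ha _).le] using hasq.tendsto_atTop_zero.sqrt
  have hc_zero : Tendsto (fun k => 2 * K * a k) atTop (𝓝 0) := by
    simpa using ha_zero.const_mul (2 * K)
  have he_zero : Tendsto (fun k => a k * h ^ 2 / (2 * K)) atTop (𝓝 0) := by
    simpa using (ha_zero.mul_const (h ^ 2)).div_const (2 * K)
  refine tendsto_zero_of_le_one_sub_mul_add_mul hb (fun k => by positivity [ha k])
    (hc_zero.eventually_le_const one_pos) ?_ he_zero (.of_forall fun k => ?_)
  · rwa [summable_mul_left_iff (by positivity)]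
  · convert hrec k using 1
    field_simp
end

section
/- Let (a_k) be positive with Σ a_k = ∞ and Σ a_k² < ∞, and let b_k ≥ 0 satisfy b_{k+1} ≤ (1 − 2K a_k) b_k + h² a_k² for all k (with K > 0, h ≥ 0, and a_k small enough that 1 − 2K a_k ≥ 0). Then lim_{k→∞} b_k = 0. -/
open Filter

/-- Deterministic contraction lemma: nonnegative `b_k` with
`b_{k+1} ≤ (1 − 2K a_k) b_k + h² a_k²`, `1 − 2K a_k ≥ 0`, positive `a_k` with
`Σ a_k = ∞` and `Σ a_k² < ∞`, tends to zero. -/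
theorem contraction_lemma (b a : ℕ → ℝ) (K h : ℝ) (hK : 0 < K) (hh : 0 ≤ h)
    (hb : ∀ k, 0 ≤ b k) (ha : ∀ k, 0 < a k) (hsmall : ∀ k, 0 ≤ 1 - 2 * K * a k)
    (hadiv : ¬ Summable a) (hasq : Summable fun k => (a k) ^ 2)
    (hrec : ∀ k, b (k + 1) ≤ (1 - 2 * K * a k) * b k + h ^ 2 * (a k) ^ 2) :
    Tendsto b atTop (nhds 0) := by
  rw [Metric.tendsto_atTop]
  intro ε hε
  -- choose m with small tail
  have htail0 : Tendsto (fun i => ∑' k, (a (k + i)) ^ 2) atTop (nhds 0) :=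
    by simpa using tendsto_sum_nat_add (fun k => (a k) ^ 2)
  have htail : Tendsto (fun i => h ^ 2 * ∑' k, (a (k + i)) ^ 2) atTop (nhds 0) := by
    simpa using htail0.const_mul (h ^ 2)
  obtain ⟨m, hm⟩ := (htail.eventually (gt_mem_nhds (by positivity : (0:ℝ) < ε / 2))).exists
  -- key inductive bound
  have key : ∀ n, m ≤ n → b n ≤ (∏ k ∈ Finset.Ico m n, (1 - 2 * K * a k)) * b m
      + h ^ 2 * ∑ k ∈ Finset.Ico m n, (a k) ^ 2 := by
    intro n hn
    induction n with
    | zero =>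
      obtain rfl : m = 0 := Nat.le_zero.mp hn
      simp
    | succ n ih =>
      rcases Nat.lt_or_ge n m with h1 | h1
      · have : m = n + 1 := le_antisymm hn h1
        subst this
        simp
      · have hbn := ih h1
        have hprodnn : (0:ℝ) ≤ ∏ k ∈ Finset.Ico m n, (1 - 2 * K * a k) :=
          Finset.prod_nonneg fun k _ => hsmall k
        have hsumnn : (0:ℝ) ≤ ∑ k ∈ Finset.Ico m n, (a k) ^ 2 :=
          Finset.sum_nonneg fun k _ => sq_nonneg _
        calc b (n + 1) ≤ (1 - 2 * K * a n) * b n + h ^ 2 * (a n) ^ 2 := hrec n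
          _ ≤ (1 - 2 * K * a n) * ((∏ k ∈ Finset.Ico m n, (1 - 2 * K * a k)) * b m
                + h ^ 2 * ∑ k ∈ Finset.Ico m n, (a k) ^ 2) + h ^ 2 * (a n) ^ 2 := by
              have := mul_le_mul_of_nonneg_left hbn (hsmall n)
              linarith
          _ ≤ (∏ k ∈ Finset.Ico m (n + 1), (1 - 2 * K * a k)) * b m
                + h ^ 2 * ∑ k ∈ Finset.Ico m (n + 1), (a k) ^ 2 := by
              rw [Finset.prod_Ico_succ_top h1, Finset.sum_Ico_succ_top h1]
              have h2 : 1 - 2 * K * a n ≤ 1 := by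
                have := (ha n).le; nlinarith [hK.le]
              have h3 : (0:ℝ) ≤ h ^ 2 * ∑ k ∈ Finset.Ico m n, (a k) ^ 2 := by positivity
              nlinarith [hsmall n]
  -- the product tends to 0
  have hsum : Tendsto (fun n => ∑ k ∈ Finset.Ico m n, a k) atTop atTop := by
    have h0 : Tendsto (fun n => ∑ k ∈ Finset.range n, a k) atTop atTop :=
      (not_summable_iff_tendsto_nat_atTop_of_nonneg fun k => (ha k).le).mp hadiv
    have h1 : Tendsto (fun n => (∑ k ∈ Finset.range n, a k) - ∑ k ∈ Finset.range m, a k)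
        atTop atTop := tendsto_atTop_add_const_right _ _ h0
    apply h1.congr'
    filter_upwards [eventually_ge_atTop m] with n hn
    rw [Finset.sum_Ico_eq_sub _ hn]
  have hexp : Tendsto (fun n => Real.exp (-(2 * K) * ∑ k ∈ Finset.Ico m n, a k))
      atTop (nhds 0) := by
    apply Real.tendsto_exp_atBot.comp
    exact Tendsto.const_mul_atTop_of_neg (by linarith : -(2 * K) < 0) hsum
  have hprod : Tendsto (fun n => (∏ k ∈ Finset.Ico m n, (1 - 2 * K * a k)) * b m)
      atTop (nhds 0) := by
    have hsq : Tendsto (fun n => ∏ k ∈ Finset.Ico m n, (1 - 2 * K * a k)) atTop (nhds 0) := by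
      apply squeeze_zero (fun n => Finset.prod_nonneg fun k _ => hsmall k) _ hexp
      intro n
      calc ∏ k ∈ Finset.Ico m n, (1 - 2 * K * a k)
          ≤ ∏ k ∈ Finset.Ico m n, Real.exp (-(2 * K * a k)) := by
            apply Finset.prod_le_prod (fun k _ => hsmall k)
            intro k _
            have := Real.add_one_le_exp (-(2 * K * a k))
            linarith
        _ = Real.exp (-(2 * K) * ∑ k ∈ Finset.Ico m n, a k) := by
            rw [← Real.exp_sum]
            exact congrArg Real.exp (by rw [Finset.mul_sum]; exact Finset.sum_congr rfl fun k _ => by ring)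
    simpa using hsq.mul_const (b m)
  obtain ⟨N, hN⟩ := (hprod.eventually (gt_mem_nhds (by positivity : (0:ℝ) < ε / 2))).exists_forall_of_atTop
  refine ⟨max m N, fun n hn => ?_⟩
  have hmn : m ≤ n := le_trans (le_max_left _ _) hn
  have hNn : N ≤ n := le_trans (le_max_right _ _) hn
  have hbound := key n hmn
  -- tail sum bound
  have htb : ∑ k ∈ Finset.Ico m n, (a k) ^ 2 ≤ ∑' k, (a (k + m)) ^ 2 := by
    rw [Finset.sum_Ico_eq_sum_range]
    have hsummable : Summable fun k => (a (k + m)) ^ 2 :=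
      (summable_nat_add_iff m).mpr hasq
    calc ∑ k ∈ Finset.range (n - m), (a (m + k)) ^ 2
        = ∑ k ∈ Finset.range (n - m), (a (k + m)) ^ 2 := by
          simp [Nat.add_comm]
      _ ≤ ∑' k, (a (k + m)) ^ 2 := Summable.sum_le_tsum _ (fun k _ => sq_nonneg _) hsummable
  have h1 := hN n hNn
  have h2 : h ^ 2 * ∑ k ∈ Finset.Ico m n, (a k) ^ 2 ≤ h ^ 2 * ∑' k, (a (k + m)) ^ 2 :=
    mul_le_mul_of_nonneg_left htb (by positivity)
  rw [Real.dist_eq, sub_zero, abs_of_nonneg (hb n)]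
  linarith
end
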